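/- arXiv:2602.03146 — 4 statements merged into one kernel-verified Lean document; each statement's English description precedes it below -/
import Mathlib

section
/- For real p ∈ (0,1) with p ≠ 1/2 (and more precisely on (0, 1/2)), the function f(p) = log(1-p)/log(p) is strictly increasing on (0, 1/2]. -/
/-- `p ↦ log(1-p)/log(p)` is strictly increasing on `(0, 1/2]`. -/
theorem stmt7 :
    StrictMonoOn (fun p : ℝ => Real.log (1 - p) / Real.log p) (Set.Ioc 0 (1 / 2)) := by
  apply strictMonoOn_of_deriv_pos (convex_Ioc 0 (1 / 2))
  · intro x hx
    obtain ⟨hx0, hx2⟩ := hx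
    have hx1 : x < 1 := by linarith
    have hlogx : Real.log x ≠ 0 := ne_of_lt (Real.log_neg hx0 hx1)
    apply ContinuousWithinAt.div
    · exact ((Real.continuousAt_log (by simp; linarith)).comp
        (continuousAt_const.sub continuousAt_id)).continuousWithinAt
    · exact (Real.continuousAt_log (ne_of_gt hx0)).continuousWithinAt
    · exact hlogx
  · intro x hx
    rw [interior_Ioc] at hx
    obtain ⟨hx0, hx2⟩ := hx
    have hx1 : x < 1 := by linarith
    have h1x : (0:ℝ) < 1 - x := by linarith
    have hlogx : Real.log x < 0 := Real.log_neg hx0 hx1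
    have hlog1x : Real.log (1 - x) < 0 := Real.log_neg h1x (by linarith)
    have hd1 : HasDerivAt (fun p : ℝ => Real.log (1 - p)) (-(1 - x)⁻¹) x := by
      have h := (Real.hasDerivAt_log (ne_of_gt h1x)).comp x
        ((hasDerivAt_const x (1:ℝ)).sub (hasDerivAt_id x))
      exact h.congr_deriv (by ring)
    have hd2 : HasDerivAt Real.log x⁻¹ x := Real.hasDerivAt_log (ne_of_gt hx0)
    have hd : HasDerivAt (fun p : ℝ => Real.log (1 - p) / Real.log p)
        ((-(1 - x)⁻¹ * Real.log x - Real.log (1 - x) * x⁻¹) / Real.log x ^ 2) x :=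
      hd1.div hd2 (ne_of_lt hlogx)
    rw [hd.deriv]
    apply div_pos
    · have t1 : 0 < -(1 - x)⁻¹ * Real.log x :=
        mul_pos_of_neg_of_neg (neg_neg_of_pos (inv_pos.mpr h1x)) hlogx
      have t2 : Real.log (1 - x) * x⁻¹ < 0 :=
        mul_neg_of_neg_of_pos hlog1x (inv_pos.mpr hx0)
      linarith
    · exact pow_two_pos_of_ne_zero (ne_of_lt hlogx)
end

section
/- For f(x) = log(1-x)/log(x), the derivative satisfies f'(x) = (−log(x)/(1−x) − log(1−x)/x)/ (log x)², and for all x ∈ (0, 1/2], f'(x) ≥ 1/(−2 log x). -/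
/-- for `x ∈ (0, 1/2]`, the derivative of `f(x) = log(1-x)/log(x)` is
`(−log x/(1−x) − log(1−x)/x)/(log x)²`, and this quantity is at least `1/(−2 log x)`. -/
theorem stmt8 (x : ℝ) (hx0 : 0 < x) (hx1 : x ≤ 1 / 2) :
    HasDerivAt (fun y : ℝ => Real.log (1 - y) / Real.log y)
      ((-Real.log x / (1 - x) - Real.log (1 - x) / x) / (Real.log x) ^ 2) x ∧
    1 / (-2 * Real.log x) ≤
      (-Real.log x / (1 - x) - Real.log (1 - x) / x) / (Real.log x) ^ 2 := by
  have hx1' : x < 1 := lt_of_le_of_lt hx1 (by norm_num)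
  have h1x : 0 < 1 - x := by linarith
  have hlogneg : Real.log x < 0 := Real.log_neg hx0 hx1'
  have hlogne : Real.log x ≠ 0 := ne_of_lt hlogneg
  constructor
  · have h1 : HasDerivAt (fun y : ℝ => Real.log (1 - y)) ((1 / (1 - x)) * (-1)) x := by
      have hsub : HasDerivAt (fun y : ℝ => 1 - y) (-1) x := by
        simpa using (hasDerivAt_id x).const_sub 1
      simpa [Function.comp_def] using (Real.hasDerivAt_log h1x.ne').comp x hsub
    have h2 : HasDerivAt Real.log (1 / x) x := by
      simpa [one_div] using Real.hasDerivAt_log hx0.ne'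
    have := h1.div h2 hlogne
    refine this.congr_deriv ?_
    rw [div_left_inj' (pow_ne_zero 2 hlogne)]
    ring
  · have hlog1x : Real.log (1 - x) ≤ 0 := Real.log_nonpos h1x.le (by linarith)
    have hA : -Real.log x / 2 ≤ -Real.log x / (1 - x) - Real.log (1 - x) / x := by
      have t1 : -Real.log x / 2 ≤ -Real.log x / (1 - x) := by
        apply div_le_div_of_nonneg_left (by linarith) h1x (by linarith)
      have t2 : 0 ≤ -(Real.log (1 - x) / x) :=
        neg_nonneg.mpr (div_nonpos_of_nonpos_of_nonneg hlog1x hx0.le)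
      linarith
    have hsq : 0 < (Real.log x) ^ 2 := by positivity
    have key : 1 / (-2 * Real.log x) = (-Real.log x / 2) / (Real.log x) ^ 2 := by
      field_simp
    rw [key]
    exact div_le_div_of_nonneg_right hA hsq.le
end

section
/- Let n ≥ 2 and consider f(x) = log(1-x)/log(x) restricted to the interval I = [1/(n+1), 1/2]. Then f is strictly increasing on I and its inverse h = f⁻¹ satisfies |h(u) - h(v)| ≤ 2 log(n+1) · |u - v| for all u, v in f(I). -/
open Real Set

namespace Stmt9Aux

noncomputable def f (x : ℝ) : ℝ := Real.log (1 - x) / Real.log x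

noncomputable def f' (x : ℝ) : ℝ :=
  ((-1) / (1 - x) * Real.log x - Real.log (1 - x) * x⁻¹) / (Real.log x) ^ 2

lemma hasDerivAt_f {x : ℝ} (hx0 : 0 < x) (hx1 : x < 1) :
    HasDerivAt f (f' x) x := by
  have h1x : (0 : ℝ) < 1 - x := by linarith
  have hlog : Real.log x < 0 := Real.log_neg hx0 hx1
  have h1 : HasDerivAt (fun y : ℝ => Real.log (1 - y)) ((-1) / (1 - x)) x := by
    have := (((hasDerivAt_id x).const_sub 1)).log h1x.ne'
    simpa using this
  have h2 : HasDerivAt Real.log x⁻¹ x := Real.hasDerivAt_log hx0.ne'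
  exact h1.div h2 hlog.ne

lemma deriv_bound {n : ℕ} (hn : 2 ≤ n) {x : ℝ}
    (hx : x ∈ Ioo (1 / ((n : ℝ) + 1)) (1 / 2)) :
    (2 * Real.log ((n : ℝ) + 1))⁻¹ ≤ f' x := by
  obtain ⟨hxl, hxr⟩ := hx
  have hn1 : (1 : ℝ) < (n : ℝ) + 1 := by
    have : (2 : ℝ) ≤ (n : ℝ) := by exact_mod_cast hn
    linarith
  have hx0 : 0 < x := lt_trans (by positivity) hxl
  have hx1 : x < 1 := by linarith
  have h1x : (0 : ℝ) < 1 - x := by linarith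
  have hlog : Real.log x < 0 := Real.log_neg hx0 hx1
  have hlog1 : Real.log (1 - x) < 0 := Real.log_neg h1x (by linarith)
  set A : ℝ := -Real.log x with hA
  have hApos : 0 < A := by simp [hA]; linarith
  set L : ℝ := Real.log ((n : ℝ) + 1) with hL
  have hLpos : 0 < L := Real.log_pos hn1
  have hAL : A ≤ L := by
    have : Real.log (1 / ((n : ℝ) + 1)) ≤ Real.log x :=
      Real.log_le_log (by positivity) (le_of_lt hxl)
    rw [Real.log_div one_ne_zero (by linarith), Real.log_one] at this
    simp only [hA, hL]; linarith
  -- numerator bound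
  have hN : A ≤ (-1) / (1 - x) * Real.log x - Real.log (1 - x) * x⁻¹ := by
    have e1 : (-1) / (1 - x) * Real.log x = A / (1 - x) := by
      field_simp [hA]; linarith
    have e2 : A ≤ A / (1 - x) := by
      rw [le_div_iff₀ h1x]
      nlinarith
    have e3 : 0 ≤ -Real.log (1 - x) * x⁻¹ :=
      mul_nonneg (by linarith) (inv_nonneg.mpr hx0.le)
    rw [e1]; nlinarith [e3]
  have hsq : (Real.log x) ^ 2 = A ^ 2 := by rw [hA]; ring
  rw [f', hsq]
  have step1 : (2 * L)⁻¹ ≤ A / A ^ 2 := by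
    have : A / A ^ 2 = A⁻¹ := by field_simp
    rw [this, inv_le_inv₀ (by positivity) hApos]
    linarith
  calc (2 * L)⁻¹ ≤ A / A ^ 2 := step1
    _ ≤ ((-1) / (1 - x) * Real.log x - Real.log (1 - x) * x⁻¹) / A ^ 2 := by
        exact div_le_div_of_nonneg_right hN (by positivity)
    _ = _ := rfl


lemma mem_facts {n : ℕ} (hn : 2 ≤ n) {x : ℝ}
    (hx : x ∈ Icc (1 / ((n : ℝ) + 1)) (1 / 2)) :
    0 < x ∧ x < 1 ∧ Real.log x ≠ 0 := by
  have h0 : (0 : ℝ) < 1 / ((n : ℝ) + 1) := by positivity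
  have hx0 : 0 < x := lt_of_lt_of_le h0 hx.1
  have hx1 : x < 1 := lt_of_le_of_lt hx.2 (by norm_num)
  exact ⟨hx0, hx1, (Real.log_neg hx0 hx1).ne⟩

lemma continuousOn_f {n : ℕ} (hn : 2 ≤ n) :
    ContinuousOn f (Icc (1 / ((n : ℝ) + 1)) (1 / 2)) := by
  apply ContinuousOn.div
  · apply ContinuousOn.log
    · fun_prop
    · intro x hx
      have := mem_facts hn hx
      linarith [this.2.1]
  · apply ContinuousOn.log continuousOn_id
    intro x hx; exact (mem_facts hn hx).1.ne'
  · intro x hx; exact (mem_facts hn hx).2.2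

lemma strictMono_f {n : ℕ} (hn : 2 ≤ n) :
    StrictMonoOn f (Icc (1 / ((n : ℝ) + 1)) (1 / 2)) := by
  apply strictMonoOn_of_deriv_pos (convex_Icc _ _) (continuousOn_f hn)
  intro x hx
  rw [interior_Icc] at hx
  have hm : x ∈ Icc (1 / ((n : ℝ) + 1)) (1 / 2) := Ioo_subset_Icc_self hx
  obtain ⟨hx0, hx1, _⟩ := mem_facts hn hm
  rw [(hasDerivAt_f hx0 hx1).deriv]
  have hb := deriv_bound hn hx
  have hn1 : (1 : ℝ) < (n : ℝ) + 1 := by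
    have : (2 : ℝ) ≤ (n : ℝ) := by exact_mod_cast hn
    linarith
  have hL : 0 < Real.log ((n : ℝ) + 1) := Real.log_pos hn1
  have : (0:ℝ) < (2 * Real.log ((n : ℝ) + 1))⁻¹ := by positivity
  linarith

lemma key {n : ℕ} (hn : 2 ≤ n) {a b : ℝ}
    (ha : a ∈ Icc (1 / ((n : ℝ) + 1)) (1 / 2))
    (hb : b ∈ Icc (1 / ((n : ℝ) + 1)) (1 / 2)) (hab : a ≤ b) :
    b - a ≤ 2 * Real.log ((n : ℝ) + 1) * (f b - f a) := by
  set L : ℝ := Real.log ((n : ℝ) + 1) with hLdef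
  have hn1 : (1 : ℝ) < (n : ℝ) + 1 := by
    have : (2 : ℝ) ≤ (n : ℝ) := by exact_mod_cast hn
    linarith
  have hL : 0 < L := Real.log_pos hn1
  set c : ℝ := (2 * L)⁻¹ with hc
  have hg : MonotoneOn (fun x => f x - c * x) (Icc (1 / ((n : ℝ) + 1)) (1 / 2)) := by
    apply monotoneOn_of_deriv_nonneg (convex_Icc _ _)
    · exact ((continuousOn_f hn).sub (by fun_prop))
    · intro x hx
      rw [interior_Icc] at hx
      obtain ⟨hx0, hx1, _⟩ := mem_facts hn (Ioo_subset_Icc_self hx)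
      exact (((hasDerivAt_f hx0 hx1).sub
        ((hasDerivAt_id x).const_mul c)).differentiableAt).differentiableWithinAt
    · intro x hx
      rw [interior_Icc] at hx
      obtain ⟨hx0, hx1, _⟩ := mem_facts hn (Ioo_subset_Icc_self hx)
      have hd : HasDerivAt (fun x => f x - c * x) (f' x - c * 1) x := by
        exact (hasDerivAt_f hx0 hx1).sub ((hasDerivAt_id x).const_mul c)
      rw [hd.deriv]
      have := deriv_bound hn hx
      simp only [mul_one]
      linarith
  have := hg ha hb hab
  simp only at this
  have hc2 : c * (b - a) ≤ f b - f a := by linarith [this]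
  have : b - a = (2 * L) * (c * (b - a)) := by
    rw [hc]; field_simp
  rw [this]
  have h2L : (0:ℝ) < 2 * L := by linarith
  nlinarith [hc2]

end Stmt9Aux



/-- on `I = [1/(n+1), 1/2]` (with `n ≥ 2`), `f(x) = log(1-x)/log(x)` is
strictly increasing, and any inverse `h` of `f` on `I` is Lipschitz with constant
`2 log(n+1)` on `f(I)`. -/
theorem stmt9 (n : ℕ) (hn : 2 ≤ n) :
    StrictMonoOn (fun x : ℝ => Real.log (1 - x) / Real.log x)
      (Set.Icc (1 / ((n : ℝ) + 1)) (1 / 2)) ∧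
    ∀ h : ℝ → ℝ,
      Set.InvOn h (fun x : ℝ => Real.log (1 - x) / Real.log x)
        (Set.Icc (1 / ((n : ℝ) + 1)) (1 / 2))
        ((fun x : ℝ => Real.log (1 - x) / Real.log x) ''
          Set.Icc (1 / ((n : ℝ) + 1)) (1 / 2)) →
      ∀ u ∈ (fun x : ℝ => Real.log (1 - x) / Real.log x) ''
          Set.Icc (1 / ((n : ℝ) + 1)) (1 / 2),
        ∀ v ∈ (fun x : ℝ => Real.log (1 - x) / Real.log x) ''
            Set.Icc (1 / ((n : ℝ) + 1)) (1 / 2),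
          |h u - h v| ≤ 2 * Real.log ((n : ℝ) + 1) * |u - v| := by
  constructor
  · exact Stmt9Aux.strictMono_f hn
  · rintro h hinv u ⟨a, ha, rfl⟩ v ⟨b, hb, rfl⟩
    have hha : h (Stmt9Aux.f a) = a := hinv.1 ha
    have hhb : h (Stmt9Aux.f b) = b := hinv.1 hb
    show |h (Stmt9Aux.f a) - h (Stmt9Aux.f b)| ≤
      2 * Real.log ((n : ℝ) + 1) * |Stmt9Aux.f a - Stmt9Aux.f b|
    rw [hha, hhb]
    rcases le_total a b with hab | hab
    · have hk := Stmt9Aux.key hn ha hb hab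
      have hf : Stmt9Aux.f a ≤ Stmt9Aux.f b :=
        (Stmt9Aux.strictMono_f hn).monotoneOn ha hb hab
      rw [abs_sub_comm a b, abs_of_nonneg (by linarith),
        abs_sub_comm, abs_of_nonneg (by linarith)]
      exact hk
    · have hk := Stmt9Aux.key hn hb ha hab
      have hf : Stmt9Aux.f b ≤ Stmt9Aux.f a :=
        (Stmt9Aux.strictMono_f hn).monotoneOn hb ha hab
      rw [abs_of_nonneg (by linarith), abs_of_nonneg (by linarith)]
      exact hk
end

section
/- For real p ∈ (0,1), real δ ∈ (0, 1/2), and positive integer n: if (1-δ)p ≤ (1-p)^n, then p ≤ W(n/(1-δ))/n, where W is the Lambert W function; and if p ≥ (1-δ)(1-p)^n, then p ≥ (1-δ)/(1 + (1-δ)n). -/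
/-- for `p ∈ (0,1)`, `δ ∈ (0,1/2)` and `n ≥ 1`:
if `(1-δ)p ≤ (1-p)^n` then `p ≤ W(n/(1-δ))/n` (with `W` the Lambert W function,
inverse of `x ↦ x·eˣ` on `[0,∞)`); and if `p ≥ (1-δ)(1-p)^n` then
`p ≥ (1-δ)/(1+(1-δ)n)`. -/
theorem stmt10 (p δ : ℝ) (hp0 : 0 < p) (hp1 : p < 1) (hδ0 : 0 < δ) (hδ1 : δ < 1 / 2)
    (n : ℕ) (hn : 0 < n)
    (W : ℝ → ℝ) (hW : ∀ y, 0 ≤ y → 0 ≤ W y ∧ W y * Real.exp (W y) = y)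
    (hWinv : ∀ x, 0 ≤ x → W (x * Real.exp x) = x) :
    ((1 - δ) * p ≤ (1 - p) ^ n → p ≤ W ((n : ℝ) / (1 - δ)) / n) ∧
    ((1 - δ) * (1 - p) ^ n ≤ p → (1 - δ) / (1 + (1 - δ) * n) ≤ p) := by
  have hδ' : (0:ℝ) < 1 - δ := by linarith
  have hnpos : (0:ℝ) < (n:ℝ) := Nat.cast_pos.mpr hn
  constructor
  · intro h
    -- (1-p)^n ≤ exp(-(p*n))
    have h1 : (1 - p) ^ n ≤ Real.exp (-(p * n)) := by
      have h2 : 1 - p ≤ Real.exp (-p) := by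
        have := Real.add_one_le_exp (-p); linarith
      calc (1 - p) ^ n ≤ (Real.exp (-p)) ^ n :=
            pow_le_pow_left₀ (by linarith) h2 n
        _ = Real.exp (-(p * n)) := by
            rw [← Real.exp_nat_mul]; ring_nf
    have hkey : (p * n) * Real.exp (p * n) ≤ (n : ℝ) / (1 - δ) := by
      have h3 : (1 - δ) * p ≤ Real.exp (-(p * n)) := le_trans h h1
      have h4 : (1 - δ) * p * Real.exp (p * n) ≤ 1 := by
        have := mul_le_mul_of_nonneg_right h3 (Real.exp_nonneg (p * n))
        rwa [← Real.exp_add, neg_add_cancel, Real.exp_zero] at this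
      rw [le_div_iff₀ hδ']
      nlinarith [Real.exp_pos (p * n), mul_le_mul_of_nonneg_right h4 hnpos.le]
    set y : ℝ := (n : ℝ) / (1 - δ) with hy
    have hy0 : 0 ≤ y := le_of_lt (div_pos hnpos hδ')
    obtain ⟨hW0, hWe⟩ := hW y hy0
    have hpn : p * n ≤ W y := by
      by_contra hc
      push_neg at hc
      have : W y * Real.exp (W y) < (p * n) * Real.exp (p * n) := by
        have he : Real.exp (W y) < Real.exp (p * n) := Real.exp_lt_exp.mpr hc
        have hpn0 : 0 < p * n := mul_pos hp0 hnpos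
        nlinarith [Real.exp_pos (W y)]
      rw [hWe] at this
      linarith
    rw [le_div_iff₀ hnpos]
    linarith [hpn]
  · intro h
    have h1 : 1 - p * n ≤ (1 - p) ^ n := by
      have := one_add_mul_le_pow (a := -p) (by linarith) n
      rw [← sub_eq_add_neg] at this; simpa [mul_comm] using this
    have h2 : (1 - δ) * (1 - p * n) ≤ p := by
      calc (1 - δ) * (1 - p * n) ≤ (1 - δ) * (1 - p) ^ n :=
            mul_le_mul_of_nonneg_left h1 hδ'.le
        _ ≤ p := h
    rw [div_le_iff₀ (by positivity)]
    nlinarith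
end
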